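/- arXiv:1904.07496 — 8 statements merged into one kernel-verified Lean document; each statement's English description precedes it below -/
import Mathlib

section
/- The matrix H − B is positive semidefinite; that is, for every vector z ∈ ℝⁿ, zᵀ(H − B)z ≥ 0. -/
/-!
`H - B` is block diagonal, its `i`-th block being `diag(Kᵢ) - Kᵢ / nᵢ` for the `i`-th diagonal
block `Kᵢ` of `K`. Each block is positive semidefinite: testing `Kᵢ` on `x eₛ - y eₜ` gives
`2 x y Kₛₜ ≤ x² Kₛₛ + y² Kₜₜ`, and summing this over all pairs `(s, t)` gives
`xᵀ Kᵢ x ≤ nᵢ · xᵀ diag(Kᵢ) x`.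
-/

open Matrix

namespace Matrix

variable {o R : Type*} {m' : o → Type*} [Fintype o] [DecidableEq o] [∀ i, Fintype (m' i)]

theorem blockDiagonal'_mulVec [NonUnitalNonAssocSemiring R] (M : ∀ i, Matrix (m' i) (m' i) R)
    (x : (Σ i, m' i) → R) (i : o) (s : m' i) :
    (blockDiagonal' M *ᵥ x) ⟨i, s⟩ = (M i *ᵥ fun t => x ⟨i, t⟩) s := by
  simp only [mulVec, dotProduct, Fintype.sum_sigma, blockDiagonal'_apply]
  rw [Finset.sum_eq_single i (fun j _ hj => by simp [Ne.symm hj]) (by simp)]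
  simp

theorem dotProduct_blockDiagonal'_mulVec [NonUnitalNonAssocSemiring R]
    (M : ∀ i, Matrix (m' i) (m' i) R) (x y : (Σ i, m' i) → R) :
    y ⬝ᵥ blockDiagonal' M *ᵥ x = ∑ i, (fun s => y ⟨i, s⟩) ⬝ᵥ M i *ᵥ fun t => x ⟨i, t⟩ := by
  simp only [dotProduct, Fintype.sum_sigma, blockDiagonal'_mulVec]

theorem PosSemidef.blockDiagonal' [CommRing R] [PartialOrder R] [StarRing R] [AddLeftMono R]
    {M : ∀ i, Matrix (m' i) (m' i) R} (hM : ∀ i, (M i).PosSemidef) :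
    (blockDiagonal' M).PosSemidef :=
  .of_dotProduct_mulVec_nonneg (isHermitian_blockDiagonal'_iff.mpr fun i => (hM i).isHermitian)
    fun x => by
      rw [dotProduct_blockDiagonal'_mulVec]
      exact Finset.sum_nonneg fun i _ => (hM i).dotProduct_mulVec_nonneg _

end Matrix

namespace Matrix.PosSemidef

variable {ι : Type*} [Fintype ι] {A : Matrix ι ι ℝ}

theorem two_mul_mul_le (hA : A.PosSemidef) (i j : ι) (x y : ℝ) :
    2 * (x * A i j * y) ≤ x ^ 2 * A i i + y ^ 2 * A j j := by
  classical
  have h := hA.dotProduct_mulVec_nonneg (Pi.single i x - Pi.single j y)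
  have hji : A j i = A i j := hA.isHermitian.apply i j
  simp only [star_trivial, mulVec_sub, mulVec_single, op_smul_eq_smul, dotProduct_sub,
    dotProduct_smul, sub_dotProduct, single_dotProduct, col_apply, hji, smul_eq_mul,
    sub_nonneg] at h
  nlinarith [h]

theorem dotProduct_mulVec_le_card_mul [DecidableEq ι] (hA : A.PosSemidef) (x : ι → ℝ) :
    x ⬝ᵥ A *ᵥ x ≤ Fintype.card ι * (x ⬝ᵥ diagonal A.diag *ᵥ x) := by
  have hdiag : x ⬝ᵥ diagonal A.diag *ᵥ x = ∑ i, x i ^ 2 * A i i := by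
    simp only [dotProduct, mulVec_diagonal, diag_apply]
    ring_nf
  have hsum : ∑ i, ∑ j, (x i ^ 2 * A i i + x j ^ 2 * A j j) =
      2 * (Fintype.card ι * ∑ i, x i ^ 2 * A i i) := by
    simp only [Finset.sum_add_distrib, Finset.sum_const, Finset.card_univ, nsmul_eq_mul,
      ← Finset.mul_sum]
    ring
  have h2 : 2 * (x ⬝ᵥ A *ᵥ x) = ∑ i, ∑ j, 2 * (x i * A i j * x j) := by
    simp only [dotProduct, mulVec, Finset.mul_sum]
    ring_nf
  have hpairs := Finset.sum_le_sum fun i (_ : i ∈ Finset.univ) =>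
    Finset.sum_le_sum fun j (_ : j ∈ Finset.univ) => hA.two_mul_mul_le i j (x i) (x j)
  rw [hdiag]
  linarith

theorem diagonal_diag_sub_inv_card_smul [DecidableEq ι] (hA : A.PosSemidef) :
    (diagonal A.diag - (Fintype.card ι : ℝ)⁻¹ • A).PosSemidef := by
  refine .of_dotProduct_mulVec_nonneg
    ((isHermitian_diagonal _).sub (hA.isHermitian.smul (IsSelfAdjoint.all _))) fun x => ?_
  have hD : 0 ≤ x ⬝ᵥ diagonal A.diag *ᵥ x := by
    simpa only [star_trivial] using
      (PosSemidef.diagonal (d := A.diag) fun _ => hA.diag_nonneg).dotProduct_mulVec_nonneg x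
  rw [star_trivial, sub_mulVec, dotProduct_sub, smul_mulVec, dotProduct_smul, smul_eq_mul,
    sub_nonneg]
  rcases (Nat.cast_nonneg (Fintype.card ι) : (0 : ℝ) ≤ _).eq_or_lt with hc | hc
  · simpa [← hc] using hD
  · rw [inv_mul_le_iff₀ hc]
    exact hA.dotProduct_mulVec_le_card_mul x

end Matrix.PosSemidef

theorem H_sub_B_posSemidef_general
    (g : ℕ) (nc : Fin g → ℕ)
    (K : Matrix ((i : Fin g) × Fin (nc i)) ((i : Fin g) × Fin (nc i)) ℝ)
    (hK : K.PosSemidef)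
    (H B : Matrix ((i : Fin g) × Fin (nc i)) ((i : Fin g) × Fin (nc i)) ℝ)
    (hH : H = Matrix.diagonal fun q => K q q)
    (hB : ∀ q r, B q r = if q.1 = r.1 then K q r / (nc q.1 : ℝ) else 0)
    (z : (i : Fin g) × Fin (nc i) → ℝ) :
    0 ≤ z ⬝ᵥ (H - B).mulVec z := by
  set Kblock := fun i => K.submatrix (Sigma.mk i) (Sigma.mk i)
  have hblocks : H - B =
      blockDiagonal' fun i => diagonal (Kblock i).diag - (nc i : ℝ)⁻¹ • Kblock i := by
    ext ⟨i, s⟩ ⟨j, t⟩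
    rw [hH, Matrix.sub_apply, hB, blockDiagonal'_apply']
    by_cases hij : i = j
    · subst hij
      by_cases hst : s = t <;> simp [hst, Kblock, div_eq_inv_mul]
    · simp [hij]
  have hpsd : (H - B).PosSemidef := hblocks ▸ PosSemidef.blockDiagonal' fun i => by
    simpa using (hK.submatrix (Sigma.mk i)).diagonal_diag_sub_inv_card_smul
  simpa using hpsd.dotProduct_mulVec_nonneg z

/-- The matrix H − B is positive semidefinite: for every z ∈ ℝⁿ, zᵀ(H − B)z ≥ 0.
Here coordinates are indexed by pairs (i, s) with i a class and s an index within
class i; K is a p.s.d. kernel matrix, H is the diagonal of K, and B is the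
block-diagonal matrix whose i-th diagonal block is the i-th diagonal block
of K divided by the class size n_i. -/
theorem H_sub_B_posSemidef
    (g : ℕ) (hg : 1 ≤ g) (nc : Fin g → ℕ) (hnc : ∀ i, 1 ≤ nc i)
    (K : Matrix ((i : Fin g) × Fin (nc i)) ((i : Fin g) × Fin (nc i)) ℝ)
    (hK : K.PosSemidef)
    (H B : Matrix ((i : Fin g) × Fin (nc i)) ((i : Fin g) × Fin (nc i)) ℝ)
    (hH : H = Matrix.diagonal fun q => K q q)
    (hB : ∀ q r, B q r = if q.1 = r.1 then K q r / (nc q.1 : ℝ) else 0)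
    (z : (i : Fin g) × Fin (nc i) → ℝ) :
    0 ≤ z ⬝ᵥ (H - B).mulVec z :=
  H_sub_B_posSemidef_general g nc K hK H B hH hB z
end

section
/- For every positive semidefinite real symmetric m×m matrix M, the matrix D − (1/m)M is positive semidefinite, where D is the diagonal matrix with the same diagonal entries as M; that is, for all z ∈ ℝ^m, Σ_{l=1}^m z_l² M_{ll} − (1/m) Σ_{u=1}^m Σ_{v=1}^m z_u z_v M_{uv} ≥ 0. -/
/-!
With `A = diag(z) M diag(z)`, again positive semidefinite, the claim reads
`∑ᵤ ∑ᵥ A u v ≤ m · tr A`; this follows by summing `2 A u v ≤ A u u + A v v`, the quadratic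
form of `A` evaluated at `e_u - e_v`.
-/

open Matrix

namespace Matrix.PosSemidef

variable {n : Type*} [Fintype n] {A : Matrix n n ℝ}

theorem two_mul_apply_le [DecidableEq n] (hA : A.PosSemidef) (i j : n) :
    2 * A i j ≤ A i i + A j j := by
  have hsymm : A j i = A i j := hA.isHermitian.apply i j
  have h := hA.dotProduct_mulVec_nonneg (Pi.single i 1 - Pi.single j 1)
  simp only [star_trivial, mulVec_sub, mulVec_single_one, dotProduct_sub, sub_dotProduct,
    single_dotProduct, one_mul, col_apply] at h
  linarith

theorem sum_apply_le_card_mul_trace (hA : A.PosSemidef) :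
    ∑ i, ∑ j, A i j ≤ Fintype.card n * A.trace := by
  classical
  have h : ∑ i, ∑ j, 2 * A i j ≤ ∑ i, ∑ j, (A i i + A j j) :=
    Finset.sum_le_sum fun i _ => Finset.sum_le_sum fun j _ => hA.two_mul_apply_le i j
  simp only [← Finset.mul_sum, Finset.sum_add_distrib, Finset.sum_const, Finset.card_univ,
    nsmul_eq_mul] at h
  simp only [trace, diag_apply]
  linarith

end Matrix.PosSemidef

theorem diagonal_sub_avg_posSemidef_general
    (m : ℕ)
    (M : Matrix (Fin m) (Fin m) ℝ) (hM : M.PosSemidef)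
    (z : Fin m → ℝ) :
    0 ≤ ∑ l, z l ^ 2 * M l l - (1 / (m : ℝ)) * ∑ u, ∑ v, z u * z v * M u v := by
  set A := (diagonal z)ᴴ * M * diagonal z
  have hA : A.PosSemidef := hM.conjTranspose_mul_mul_same _
  have hApply : ∀ u v, A u v = z u * z v * M u v := fun u v => by
    simp only [A, diagonal_conjTranspose, star_trivial, mul_diagonal, diagonal_mul]
    ring
  have hTrace : A.trace = ∑ l, z l ^ 2 * M l l := by
    simp only [trace, diag_apply, hApply, sq]
  have hSum := hA.sum_apply_le_card_mul_trace
  simp only [hApply, hTrace, Fintype.card_fin] at hSum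
  rw [sub_nonneg, one_div]
  exact inv_mul_le_of_le_mul₀ m.cast_nonneg (hTrace ▸ hA.trace_nonneg) hSum

/-- For every positive semidefinite real symmetric m×m matrix M, the matrix
D − (1/m)M is positive semidefinite, where D is the diagonal matrix with the
same diagonal entries as M: for all z ∈ ℝ^m,
Σ_l z_l² M_{ll} − (1/m) Σ_u Σ_v z_u z_v M_{uv} ≥ 0. -/
theorem diagonal_sub_avg_posSemidef
    (m : ℕ) (hm : 1 ≤ m)
    (M : Matrix (Fin m) (Fin m) ℝ) (hM : M.PosSemidef)
    (z : Fin m → ℝ) :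
    0 ≤ ∑ l, z l ^ 2 * M l l - (1 / (m : ℝ)) * ∑ u, ∑ v, z u * z v * M u v :=
  diagonal_sub_avg_posSemidef_general m M hM z
end

section
/- The matrix B − (1/n)K is positive semidefinite; that is, for every vector z ∈ ℝⁿ, zᵀ B z − (1/n) zᵀ K z ≥ 0. -/
open Matrix

/-!
Factor the kernel as `K = Cᵀ C`, so that `x ⬝ K x = ∑ₖ ((C x)ₖ)²`. Splitting `z` into its class
parts `zᵢ`, the quadratic form of `B` is `∑ᵢ (zᵢ ⬝ K zᵢ) / nᵢ`, while `z ⬝ K z / n` is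
`∑ₖ (∑ᵢ (C zᵢ)ₖ)² / ∑ᵢ nᵢ`. Sedrakyan's (Titu's) inequality, applied for each `k`, compares the two.
-/

namespace Matrix

variable {m n : Type*} [Fintype m] [Fintype n]

lemma dotProduct_transpose_mul_self_mulVec (C : Matrix m n ℝ) (x : n → ℝ) :
    x ⬝ᵥ (Cᵀ * C) *ᵥ x = ∑ k, (C *ᵥ x) k ^ 2 := by
  rw [← mulVec_mulVec, dotProduct_mulVec, vecMul_transpose, dotProduct]
  simp only [sq]

theorem PosSemidef.dotProduct_mulVec_sum_div_le {K : Matrix n n ℝ} (hK : K.PosSemidef)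
    {ι : Type*} (s : Finset ι) (x : ι → n → ℝ) {w : ι → ℝ} (hw : ∀ i ∈ s, 0 < w i) :
    (∑ i ∈ s, x i) ⬝ᵥ K *ᵥ (∑ i ∈ s, x i) / ∑ i ∈ s, w i ≤
      ∑ i ∈ s, x i ⬝ᵥ K *ᵥ x i / w i := by
  classical
  obtain ⟨C, rfl⟩ : ∃ C : Matrix n n ℝ, K = Cᵀ * C := by
    open scoped MatrixOrder in exact CStarAlgebra.nonneg_iff_eq_star_mul_self.mp hK.nonneg
  simp only [dotProduct_transpose_mul_self_mulVec]
  simp only [mulVec_sum, Finset.sum_apply]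
  calc (∑ k, (∑ i ∈ s, (C *ᵥ x i) k) ^ 2) / ∑ i ∈ s, w i
      = ∑ k, (∑ i ∈ s, (C *ᵥ x i) k) ^ 2 / ∑ i ∈ s, w i := Finset.sum_div _ _ _
    _ ≤ ∑ k, ∑ i ∈ s, (C *ᵥ x i) k ^ 2 / w i :=
        Finset.sum_le_sum fun k _ => Finset.sq_sum_div_le_sum_sq_div s _ hw
    _ = ∑ i ∈ s, (∑ k, (C *ᵥ x i) k ^ 2) / w i := by
        rw [Finset.sum_comm]
        exact Finset.sum_congr rfl fun i _ => (Finset.sum_div _ _ _).symm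

lemma dotProduct_mulVec_eq_sum_class_div {κ : Type*} [Fintype κ] [DecidableEq κ] (c : n → κ)
    (w : κ → ℝ) {K B : Matrix n n ℝ}
    (hB : ∀ q r, B q r = if c q = c r then K q r / w (c q) else 0) (z : n → ℝ) :
    z ⬝ᵥ B *ᵥ z =
      ∑ j, (fun q => if c q = j then z q else 0) ⬝ᵥ K *ᵥ (fun q => if c q = j then z q else 0) /
        w j := by
  simp only [dotProduct, mulVec, hB, Finset.mul_sum, Finset.sum_div]
  conv_rhs => rw [Finset.sum_comm]
  refine Finset.sum_congr rfl fun q _ => ?_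
  conv_rhs => rw [Finset.sum_comm]
  refine Finset.sum_congr rfl fun r _ => ?_
  rw [Finset.sum_eq_single (c q) (fun j _ hj => by simp [Ne.symm hj]) (by simp), if_pos rfl]
  by_cases h : c q = c r
  · rw [if_pos h, if_pos h.symm, h]
    ring
  · rw [if_neg h, if_neg (Ne.symm h)]
    simp

end Matrix

theorem B_sub_avgK_posSemidef_general
    (g : ℕ) (nc : Fin g → ℕ) (hnc : ∀ i, 1 ≤ nc i)
    (K : Matrix ((i : Fin g) × Fin (nc i)) ((i : Fin g) × Fin (nc i)) ℝ)
    (hK : K.PosSemidef)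
    (B : Matrix ((i : Fin g) × Fin (nc i)) ((i : Fin g) × Fin (nc i)) ℝ)
    (hB : ∀ q r, B q r = if q.1 = r.1 then K q r / (nc q.1 : ℝ) else 0)
    (z : (i : Fin g) × Fin (nc i) → ℝ) :
    0 ≤ z ⬝ᵥ B.mulVec z - (1 / ((∑ i, nc i : ℕ) : ℝ)) * (z ⬝ᵥ K.mulVec z) := by
  set part : Fin g → (i : Fin g) × Fin (nc i) → ℝ := fun j q => if q.1 = j then z q else 0
  have hpart : ∑ j, part j = z := by
    funext q
    simp [part, Finset.sum_apply]
  have key := hK.dotProduct_mulVec_sum_div_le Finset.univ part (w := fun i => (nc i : ℝ))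
    fun i _ => by exact_mod_cast hnc i
  rw [hpart] at key
  rw [dotProduct_mulVec_eq_sum_class_div Sigma.fst (fun i => (nc i : ℝ)) hB, Nat.cast_sum,
    one_div_mul_eq_div]
  exact sub_nonneg.mpr key

/-- The matrix B − (1/n)K is positive semidefinite: for every z ∈ ℝⁿ,
zᵀBz − (1/n) zᵀKz ≥ 0, where K is a p.s.d. kernel matrix indexed by pairs
(i, s) (class i, index s within class i), B is the block-diagonal matrix whose
i-th diagonal block is the i-th diagonal block of K divided by the class size
n_i, and n = Σ_i n_i is the total size. -/
theorem B_sub_avgK_posSemidef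
    (g : ℕ) (hg : 1 ≤ g) (nc : Fin g → ℕ) (hnc : ∀ i, 1 ≤ nc i)
    (K : Matrix ((i : Fin g) × Fin (nc i)) ((i : Fin g) × Fin (nc i)) ℝ)
    (hK : K.PosSemidef)
    (B : Matrix ((i : Fin g) × Fin (nc i)) ((i : Fin g) × Fin (nc i)) ℝ)
    (hB : ∀ q r, B q r = if q.1 = r.1 then K q r / (nc q.1 : ℝ) else 0)
    (z : (i : Fin g) × Fin (nc i) → ℝ) :
    0 ≤ z ⬝ᵥ B.mulVec z - (1 / ((∑ i, nc i : ℕ) : ℝ)) * (z ⬝ᵥ K.mulVec z) :=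
  B_sub_avgK_posSemidef_general g nc hnc K hK B hB z
end

section
/- Gradient descent with exact line search converges linearly in function values: if w^{(t+1)} = w^{(t)} − d^{(t)} ∇f(w^{(t)}) with d^{(t)} = ‖∇f(w^{(t)})‖² / (∇f(w^{(t)})ᵀ(Q + βI)∇f(w^{(t)})) whenever ∇f(w^{(t)}) ≠ 0 (and w^{(t+1)} = w^{(t)} otherwise), then for every t ≥ 0, f(w^{(t+1)}) − f(w*) ≤ (1 − (σ_min(Q) + β)/(σ_max(Q) + β)) · (f(w^{(t)}) − f(w*)), where w* = (Q + βI)⁻¹k is the unique minimizer of f. Consequently f(w^{(t)}) → f(w*) as t → ∞. -/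
/-!
Put `A = Q + β • 1`, `m = σmin + β`, `M = σmax + β` and `w* = A⁻¹ k`. Then
`f x - f w* = ½ vᵀ A v` with `v = x - w*`, and the gradient is `g = A v`. The exact line-search
step lowers `vᵀ A v` by `‖g‖⁴ / gᵀ A g`. The eigenvalue bounds give `m ‖x‖² ≤ xᵀ A x ≤ M ‖x‖²`,
hence `gᵀ A g ≤ M ‖g‖²` and `m vᵀ A v ≤ ‖g‖²`, so the decrease is at least `(m / M) vᵀ A v`.
As `0 < m / M ≤ 1`, the gaps decay geometrically.
-/

open Matrix Filter Topology

namespace Matrix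

variable {ι 𝕜 : Type*} [Fintype ι] [RCLike 𝕜]

open scoped ComplexOrder MatrixOrder in
lemma IsHermitian.posSemidef_sub_smul_one [DecidableEq ι] {A : Matrix ι ι 𝕜}
    (hA : A.IsHermitian) {c : ℝ} (h : ∀ i, c ≤ hA.eigenvalues i) : (A - c • 1).PosSemidef := by
  rw [← le_iff, ← Algebra.algebraMap_eq_smul_one, algebraMap_le_iff_le_spectrum hA.isSelfAdjoint,
    hA.spectrum_real_eq_range_eigenvalues]
  rintro _ ⟨i, rfl⟩
  exact h i

open scoped ComplexOrder MatrixOrder in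
lemma IsHermitian.posSemidef_smul_one_sub [DecidableEq ι] {A : Matrix ι ι 𝕜}
    (hA : A.IsHermitian) {c : ℝ} (h : ∀ i, hA.eigenvalues i ≤ c) : (c • 1 - A).PosSemidef := by
  rw [← le_iff, ← Algebra.algebraMap_eq_smul_one, le_algebraMap_iff_spectrum_le hA.isSelfAdjoint,
    hA.spectrum_real_eq_range_eigenvalues]
  rintro _ ⟨i, rfl⟩
  exact h i

lemma dotProduct_add_smul_one_mulVec [DecidableEq ι] (A : Matrix ι ι ℝ) (c : ℝ) (x : ι → ℝ) :
    x ⬝ᵥ (A + c • 1) *ᵥ x = x ⬝ᵥ A *ᵥ x + c * (x ⬝ᵥ x) := by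
  rw [add_mulVec, smul_mulVec, one_mulVec, dotProduct_add, dotProduct_smul, smul_eq_mul]

variable {A : Matrix ι ι ℝ}

lemma IsHermitian.mul_dotProduct_self_le [DecidableEq ι] (hA : A.IsHermitian) {c : ℝ}
    (h : ∀ i, c ≤ hA.eigenvalues i) (x : ι → ℝ) : c * (x ⬝ᵥ x) ≤ x ⬝ᵥ A *ᵥ x := by
  have := (hA.posSemidef_sub_smul_one h).dotProduct_mulVec_nonneg x
  rw [star_trivial, sub_eq_add_neg, ← neg_smul, dotProduct_add_smul_one_mulVec] at this
  linarith

lemma IsHermitian.dotProduct_mulVec_le [DecidableEq ι] (hA : A.IsHermitian) {c : ℝ}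
    (h : ∀ i, hA.eigenvalues i ≤ c) (x : ι → ℝ) : x ⬝ᵥ A *ᵥ x ≤ c * (x ⬝ᵥ x) := by
  have := (hA.posSemidef_smul_one_sub h).dotProduct_mulVec_nonneg x
  rw [star_trivial, sub_eq_neg_add, dotProduct_add_smul_one_mulVec, neg_mulVec,
    dotProduct_neg] at this
  linarith

lemma mul_dotProduct_mulVec_le_mulVec_dotProduct_mulVec {m : ℝ} (hm₀ : 0 ≤ m)
    (hm : ∀ x, m * (x ⬝ᵥ x) ≤ x ⬝ᵥ A *ᵥ x) (v : ι → ℝ) :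
    m * (v ⬝ᵥ A *ᵥ v) ≤ A *ᵥ v ⬝ᵥ A *ᵥ v := by
  -- `‖Av‖² - m vᵀAv = ‖Av - m v‖² + m (vᵀAv - m ‖v‖²)`
  have hsq : 0 ≤ (A *ᵥ v - m • v) ⬝ᵥ (A *ᵥ v - m • v) := dotProduct_self_star_nonneg _
  have hexp : (A *ᵥ v - m • v) ⬝ᵥ (A *ᵥ v - m • v)
      = A *ᵥ v ⬝ᵥ A *ᵥ v - 2 * m * (v ⬝ᵥ A *ᵥ v) + m ^ 2 * (v ⬝ᵥ v) := by
    simp only [sub_dotProduct, dotProduct_sub, smul_dotProduct, dotProduct_smul, smul_eq_mul,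
      dotProduct_comm (A *ᵥ v) v]
    ring
  nlinarith [hm v]

lemma IsSymm.dotProduct_mulVec_comm (hA : A.IsSymm) (x y : ι → ℝ) :
    x ⬝ᵥ A *ᵥ y = y ⬝ᵥ A *ᵥ x := by
  rw [← dotProduct_transpose_mulVec, hA.eq]

lemma div_mul_dotProduct_mulVec_le_sq_div {m M : ℝ} (hm₀ : 0 < m) (hM₀ : 0 < M)
    (hm : ∀ x, m * (x ⬝ᵥ x) ≤ x ⬝ᵥ A *ᵥ x) (hM : ∀ x, x ⬝ᵥ A *ᵥ x ≤ M * (x ⬝ᵥ x))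
    (v : ι → ℝ) :
    m / M * (v ⬝ᵥ A *ᵥ v) ≤ (A *ᵥ v ⬝ᵥ A *ᵥ v) ^ 2 / (A *ᵥ v ⬝ᵥ A *ᵥ (A *ᵥ v)) := by
  set g := A *ᵥ v
  have hS : 0 ≤ g ⬝ᵥ g := dotProduct_self_star_nonneg g
  have hgg : g ⬝ᵥ g / M ≤ (g ⬝ᵥ g) ^ 2 / (g ⬝ᵥ A *ᵥ g) := by
    rcases hS.eq_or_lt with hS₀ | hS₀
    · simp [← hS₀]
    have hT : 0 < g ⬝ᵥ A *ᵥ g := (mul_pos hm₀ hS₀).trans_le (hm g)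
    rw [div_le_div_iff₀ hM₀ hT]
    nlinarith [hM g]
  calc m / M * (v ⬝ᵥ A *ᵥ v) = m * (v ⬝ᵥ A *ᵥ v) / M := by ring
    _ ≤ g ⬝ᵥ g / M := by
      gcongr; exact mul_dotProduct_mulVec_le_mulVec_dotProduct_mulVec hm₀.le hm v
    _ ≤ _ := hgg

end Matrix

noncomputable section ExactLineSearch

variable {ι : Type*} [Fintype ι] {A : Matrix ι ι ℝ} {k x₀ : ι → ℝ}

def quadraticObjective (A : Matrix ι ι ℝ) (k x : ι → ℝ) : ℝ :=
  1 / 2 * (x ⬝ᵥ A *ᵥ x) - x ⬝ᵥ k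

def exactLineSearchStep (A : Matrix ι ι ℝ) (k x : ι → ℝ) : ι → ℝ :=
  x - ((A *ᵥ x - k) ⬝ᵥ (A *ᵥ x - k) / ((A *ᵥ x - k) ⬝ᵥ A *ᵥ (A *ᵥ x - k))) • (A *ᵥ x - k)

lemma quadraticObjective_sub_eq (hA : A.IsSymm) (hx₀ : A *ᵥ x₀ = k) (x : ι → ℝ) :
    quadraticObjective A k x - quadraticObjective A k x₀
      = 1 / 2 * ((x - x₀) ⬝ᵥ A *ᵥ (x - x₀)) := by
  simp only [quadraticObjective, mulVec_sub, dotProduct_sub, sub_dotProduct, hx₀,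
    hA.dotProduct_mulVec_comm x₀ x]
  ring

lemma quadraticObjective_le (hA : A.PosSemidef) (hx₀ : A *ᵥ x₀ = k) (x : ι → ℝ) :
    quadraticObjective A k x₀ ≤ quadraticObjective A k x := by
  have := hA.dotProduct_mulVec_nonneg (x - x₀)
  rw [star_trivial] at this
  linarith [quadraticObjective_sub_eq (isHermitian_iff_isSymm.mp hA.isHermitian) hx₀ x]

/-- The step `‖Av‖² / (Av)ᵀA(Av)` is the exact minimiser of `s ↦ (v - s • Av)ᵀ A (v - s • Av)`. -/
lemma dotProduct_mulVec_exactLineSearch (hA : A.IsSymm) (v : ι → ℝ) :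
    (v - (A *ᵥ v ⬝ᵥ A *ᵥ v / (A *ᵥ v ⬝ᵥ A *ᵥ (A *ᵥ v))) • A *ᵥ v) ⬝ᵥ
        A *ᵥ (v - (A *ᵥ v ⬝ᵥ A *ᵥ v / (A *ᵥ v ⬝ᵥ A *ᵥ (A *ᵥ v))) • A *ᵥ v)
      = v ⬝ᵥ A *ᵥ v - (A *ᵥ v ⬝ᵥ A *ᵥ v) ^ 2 / (A *ᵥ v ⬝ᵥ A *ᵥ (A *ᵥ v)) := by
  set g := A *ᵥ v
  set S := g ⬝ᵥ g
  set T := g ⬝ᵥ A *ᵥ g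
  have hvg : v ⬝ᵥ A *ᵥ g = S := by rw [hA.dotProduct_mulVec_comm]
  simp only [mulVec_sub, mulVec_smul, dotProduct_sub, sub_dotProduct, dotProduct_smul,
    smul_dotProduct, smul_eq_mul, hvg]
  rcases eq_or_ne T 0 with hT | hT
  · simp [hT, g]
  · field_simp
    ring

theorem quadraticObjective_exactLineSearchStep_sub_le {m M : ℝ} (hA : A.IsSymm)
    (hm₀ : 0 < m) (hM₀ : 0 < M)
    (hm : ∀ x, m * (x ⬝ᵥ x) ≤ x ⬝ᵥ A *ᵥ x) (hM : ∀ x, x ⬝ᵥ A *ᵥ x ≤ M * (x ⬝ᵥ x))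
    (hx₀ : A *ᵥ x₀ = k) (x : ι → ℝ) :
    quadraticObjective A k (exactLineSearchStep A k x) - quadraticObjective A k x₀
      ≤ (1 - m / M) * (quadraticObjective A k x - quadraticObjective A k x₀) := by
  have hgrad : A *ᵥ x - k = A *ᵥ (x - x₀) := by rw [mulVec_sub, hx₀]
  have hstep : exactLineSearchStep A k x - x₀ = (x - x₀) -
      (A *ᵥ (x - x₀) ⬝ᵥ A *ᵥ (x - x₀) / (A *ᵥ (x - x₀) ⬝ᵥ A *ᵥ (A *ᵥ (x - x₀)))) •
        A *ᵥ (x - x₀) := by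
    rw [exactLineSearchStep, hgrad, sub_right_comm]
  rw [quadraticObjective_sub_eq hA hx₀, quadraticObjective_sub_eq hA hx₀, hstep,
    dotProduct_mulVec_exactLineSearch hA]
  nlinarith [div_mul_dotProduct_mulVec_le_sq_div hm₀ hM₀ hm hM (x - x₀)]

end ExactLineSearch

theorem tendsto_of_sub_le_mul_sub {u : ℕ → ℝ} {L r : ℝ} (hr₀ : 0 ≤ r) (hr₁ : r < 1)
    (hL : ∀ t, L ≤ u t) (hu : ∀ t, u (t + 1) - L ≤ r * (u t - L)) :
    Tendsto u atTop (𝓝 L) := by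
  rw [← tendsto_sub_nhds_zero_iff]
  refine squeeze_zero (fun t => sub_nonneg.mpr (hL t))
    (fun t => le_geom (u := fun t => u t - L) hr₀ t fun s _ => hu s) ?_
  simpa using (tendsto_pow_atTop_nhds_zero_of_lt_one hr₀ hr₁).mul_const (u 0 - L)

theorem gradient_descent_linear_convergence_general
    (n : ℕ) (Q : Matrix (Fin n) (Fin n) ℝ) (hQ : Q.PosSemidef)
    (β : ℝ) (hβ : 0 < β) (k : Fin n → ℝ)
    (f : (Fin n → ℝ) → ℝ)
    (hf : ∀ w, f w = (1 / 2) * (w ⬝ᵥ (Q + β • 1).mulVec w) - w ⬝ᵥ k)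
    (σmax σmin : ℝ)
    (hσmaxub : ∀ i, hQ.isHermitian.eigenvalues i ≤ σmax)
    (hσminmem : ∃ i, hQ.isHermitian.eigenvalues i = σmin)
    (hσminlb : ∀ i, σmin ≤ hQ.isHermitian.eigenvalues i)
    (w : ℕ → (Fin n → ℝ))
    (hw : ∀ t, ((Q + β • 1).mulVec (w t) - k ≠ 0 →
        w (t + 1) = w t -
          ((((Q + β • 1).mulVec (w t) - k) ⬝ᵥ ((Q + β • 1).mulVec (w t) - k)) /
            (((Q + β • 1).mulVec (w t) - k) ⬝ᵥ
              (Q + β • 1).mulVec ((Q + β • 1).mulVec (w t) - k))) •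
            ((Q + β • 1).mulVec (w t) - k)) ∧
      ((Q + β • 1).mulVec (w t) - k = 0 → w (t + 1) = w t)) :
    (∀ t, f (w (t + 1)) - f ((Q + β • 1)⁻¹.mulVec k)
        ≤ (1 - (σmin + β) / (σmax + β)) * (f (w t) - f ((Q + β • 1)⁻¹.mulVec k))) ∧
    Filter.Tendsto (fun t => f (w t)) Filter.atTop
      (nhds (f ((Q + β • 1)⁻¹.mulVec k))) := by
  obtain ⟨i₀, hi₀⟩ := hσminmem
  have hσmin : 0 ≤ σmin := hi₀ ▸ hQ.eigenvalues_nonneg i₀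
  have hσ : σmin ≤ σmax := hi₀ ▸ hσmaxub i₀
  set A := Q + β • 1
  have hA : A.PosDef := PosDef.posSemidef_add hQ (PosDef.one.smul hβ)
  have hk : A *ᵥ (A⁻¹ *ᵥ k) = k := by
    rw [mulVec_mulVec, mul_nonsing_inv _ (A.isUnit_iff_isUnit_det.mp hA.isUnit), one_mulVec]
  have hm : ∀ x, (σmin + β) * (x ⬝ᵥ x) ≤ x ⬝ᵥ A *ᵥ x := fun x => by
    linarith [hQ.isHermitian.mul_dotProduct_self_le hσminlb x, dotProduct_add_smul_one_mulVec Q β x]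
  have hM : ∀ x, x ⬝ᵥ A *ᵥ x ≤ (σmax + β) * (x ⬝ᵥ x) := fun x => by
    linarith [hQ.isHermitian.dotProduct_mulVec_le hσmaxub x, dotProduct_add_smul_one_mulVec Q β x]
  obtain rfl : f = quadraticObjective A k := funext hf
  have hstep : ∀ t, w (t + 1) = exactLineSearchStep A k (w t) := fun t => by
    by_cases hg : A *ᵥ w t - k = 0
    · simp [exactLineSearchStep, hg, (hw t).2 hg]
    · exact (hw t).1 hg
  have hdecay : ∀ t, quadraticObjective A k (w (t + 1)) - quadraticObjective A k (A⁻¹ *ᵥ k)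
      ≤ (1 - (σmin + β) / (σmax + β)) *
        (quadraticObjective A k (w t) - quadraticObjective A k (A⁻¹ *ᵥ k)) := fun t =>
    hstep t ▸ quadraticObjective_exactLineSearchStep_sub_le
      (isHermitian_iff_isSymm.mp hA.isHermitian) (by linarith) (by linarith) hm hM hk (w t)
  have hratio : 0 < (σmin + β) / (σmax + β) := div_pos (by linarith) (by linarith)
  have hratio₁ : (σmin + β) / (σmax + β) ≤ 1 := (div_le_one (by linarith)).mpr (by linarith)
  exact ⟨hdecay, tendsto_of_sub_le_mul_sub (by linarith) (by linarith)
    (fun t => quadraticObjective_le hA.posSemidef hk (w t)) hdecay⟩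

/-- Gradient descent with exact line search converges linearly in function
values: with w^{(t+1)} = w^{(t)} − d^{(t)} ∇f(w^{(t)}) where d^{(t)} is the
exact line-search step (and w^{(t+1)} = w^{(t)} if the gradient vanishes),
f(w^{(t+1)}) − f(w*) ≤ (1 − (σ_min(Q) + β)/(σ_max(Q) + β)) (f(w^{(t)}) − f(w*))
for every t, where w* = (Q + βI)⁻¹k; consequently f(w^{(t)}) → f(w*). -/
theorem gradient_descent_linear_convergence
    (n : ℕ) (Q : Matrix (Fin n) (Fin n) ℝ) (hQ : Q.PosSemidef)
    (β : ℝ) (hβ : 0 < β) (k : Fin n → ℝ)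
    (f : (Fin n → ℝ) → ℝ)
    (hf : ∀ w, f w = (1 / 2) * (w ⬝ᵥ (Q + β • 1).mulVec w) - w ⬝ᵥ k)
    (σmax σmin : ℝ)
    (hσmaxmem : ∃ i, hQ.isHermitian.eigenvalues i = σmax)
    (hσmaxub : ∀ i, hQ.isHermitian.eigenvalues i ≤ σmax)
    (hσminmem : ∃ i, hQ.isHermitian.eigenvalues i = σmin)
    (hσminlb : ∀ i, σmin ≤ hQ.isHermitian.eigenvalues i)
    (w : ℕ → (Fin n → ℝ))
    (hw : ∀ t, ((Q + β • 1).mulVec (w t) - k ≠ 0 →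
        w (t + 1) = w t -
          ((((Q + β • 1).mulVec (w t) - k) ⬝ᵥ ((Q + β • 1).mulVec (w t) - k)) /
            (((Q + β • 1).mulVec (w t) - k) ⬝ᵥ
              (Q + β • 1).mulVec ((Q + β • 1).mulVec (w t) - k))) •
            ((Q + β • 1).mulVec (w t) - k)) ∧
      ((Q + β • 1).mulVec (w t) - k = 0 → w (t + 1) = w t)) :
    (∀ t, f (w (t + 1)) - f ((Q + β • 1)⁻¹.mulVec k)
        ≤ (1 - (σmin + β) / (σmax + β)) * (f (w t) - f ((Q + β • 1)⁻¹.mulVec k))) ∧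
    Filter.Tendsto (fun t => f (w t)) Filter.atTop
      (nhds (f ((Q + β • 1)⁻¹.mulVec k))) :=
  gradient_descent_linear_convergence_general n Q hQ β hβ k f hf σmax σmin hσmaxub hσminmem hσminlb
    w hw
end

section
/- Along the proximal-point iteration w^{(t+1)} = (k − Q w^{(t)} + c w^{(t)})/(β + c), the sequence of objective values is monotonically non-increasing: f(w^{(t+1)}) ≤ f(w^{(t)}) for every t ≥ 0 and every starting point w^{(0)} ∈ ℝⁿ. -/
/-!
Write `d = w⁽ᵗ⁺¹⁾ − w⁽ᵗ⁾`. The iteration says exactly that `∇f(w⁽ᵗ⁾) = −(β + c) d`, so the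
exact second-order expansion of the quadratic `f` gives
`f(w⁽ᵗ⁺¹⁾) − f(w⁽ᵗ⁾) = −(β + c)‖d‖² + ½ dᵀ(Q + βI)d ≤ −½(β + c)‖d‖² ≤ 0`,
using `Q ≤ cI` (all eigenvalues of `Q` are at most `c`) and `c ≥ 0` (as `Q ⪰ 0`).
-/

open Matrix
open scoped MatrixOrder

section

variable {ι : Type*} [Fintype ι]

theorem Matrix.IsHermitian.dotProduct_mulVec_le_of_eigenvalues_le [DecidableEq ι]
    {Q : Matrix ι ι ℝ} (hQ : Q.IsHermitian) {c : ℝ} (hc : ∀ i, hQ.eigenvalues i ≤ c)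
    (x : ι → ℝ) : x ⬝ᵥ Q *ᵥ x ≤ c * (x ⬝ᵥ x) := by
  have hle : Q ≤ algebraMap ℝ _ c := le_algebraMap_of_spectrum_le (by
    rw [hQ.spectrum_real_eq_range_eigenvalues]
    rintro _ ⟨i, rfl⟩
    exact hc i) hQ
  have := (Matrix.le_iff.mp hle).dotProduct_mulVec_nonneg x
  simp only [star_trivial, sub_mulVec, dotProduct_sub, Algebra.algebraMap_eq_smul_one,
    smul_mulVec, one_mulVec, dotProduct_smul, smul_eq_mul] at this
  linarith

theorem Matrix.IsSymm.quadratic_sub_quadratic {𝕜 : Type*} [Field 𝕜] [NeZero (2 : 𝕜)]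
    {A : Matrix ι ι 𝕜} (hA : A.IsSymm) (k u v : ι → 𝕜) :
    (1 / 2 * (v ⬝ᵥ A *ᵥ v) - v ⬝ᵥ k) - (1 / 2 * (u ⬝ᵥ A *ᵥ u) - u ⬝ᵥ k) =
      (v - u) ⬝ᵥ (A *ᵥ u - k) + 1 / 2 * ((v - u) ⬝ᵥ A *ᵥ (v - u)) := by
  have hsymm : u ⬝ᵥ A *ᵥ v = v ⬝ᵥ A *ᵥ u := by
    rw [← dotProduct_transpose_mulVec, hA.eq]
  simp only [mulVec_sub, sub_dotProduct, dotProduct_sub, hsymm]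
  field_simp
  ring

theorem quadratic_proximal_step_le [DecidableEq ι] {Q : Matrix ι ι ℝ} (hQ : Q.IsSymm)
    {β c : ℝ} (hβc : 0 ≤ β + c) (hQc : ∀ x, x ⬝ᵥ Q *ᵥ x ≤ c * (x ⬝ᵥ x))
    {k u v : ι → ℝ} (hv : (β + c) • v = k - Q *ᵥ u + c • u) :
    1 / 2 * (v ⬝ᵥ (Q + β • 1) *ᵥ v) - v ⬝ᵥ k ≤ 1 / 2 * (u ⬝ᵥ (Q + β • 1) *ᵥ u) - u ⬝ᵥ k := by
  have hexpand := (hQ.add (isSymm_one.smul β)).quadratic_sub_quadratic k u v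
  set d := v - u
  have hgrad : (Q + β • 1) *ᵥ u - k = -(β + c) • d := by
    rw [neg_smul, smul_sub, hv, add_mulVec, smul_mulVec, one_mulVec]
    module
  have hcurv : d ⬝ᵥ (Q + β • 1) *ᵥ d = d ⬝ᵥ Q *ᵥ d + β * (d ⬝ᵥ d) := by
    rw [add_mulVec, smul_mulVec, one_mulVec, dotProduct_add, dotProduct_smul, smul_eq_mul]
  rw [hgrad, hcurv, dotProduct_smul, smul_eq_mul] at hexpand
  have hdd : 0 ≤ (β + c) * (d ⬝ᵥ d) := mul_nonneg hβc (dotProduct_self_star_nonneg d)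
  linarith [hQc d]

end

/-- Along the proximal-point iteration w^{(t+1)} = (k − Q w^{(t)} + c w^{(t)})/(β + c),
the sequence of objective values is monotonically non-increasing:
f(w^{(t+1)}) ≤ f(w^{(t)}) for every t and any starting point. -/
theorem ppa_objective_monotone
    (n : ℕ) (Q : Matrix (Fin n) (Fin n) ℝ) (hQ : Q.PosSemidef)
    (β : ℝ) (hβ : 0 < β) (k : Fin n → ℝ)
    (f : (Fin n → ℝ) → ℝ)
    (hf : ∀ w, f w = (1 / 2) * (w ⬝ᵥ (Q + β • 1).mulVec w) - w ⬝ᵥ k)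
    (c : ℝ) (hc : ∀ i, hQ.isHermitian.eigenvalues i ≤ c)
    (w : ℕ → (Fin n → ℝ))
    (hw : ∀ t, w (t + 1) = (β + c)⁻¹ • (k - Q.mulVec (w t) + c • w t)) :
    ∀ t, f (w (t + 1)) ≤ f (w t) := by
  intro t
  rcases isEmpty_or_nonempty (Fin n) with hn | ⟨⟨i⟩⟩
  · rw [Subsingleton.elim (w (t + 1)) (w t)]
  have hβc : 0 < β + c := by linarith [hQ.eigenvalues_nonneg i, hc i]
  have hQs : Q.IsSymm := (conjTranspose_eq_transpose_of_trivial Q).symm.trans hQ.isHermitian.eq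
  rw [hf, hf]
  refine quadratic_proximal_step_le hQs hβc.le
    (hQ.isHermitian.dotProduct_mulVec_le_of_eigenvalues_le hc) ?_
  rw [hw, smul_inv_smul₀ hβc.ne']
end

section
/- The proximal-point iterates converge geometrically to the unique minimizer: for every t ≥ 0, ‖w^{(t)} − w*‖ ≤ ((c − σ_min(Q))/(c + β))^t ‖w^{(0)} − w*‖, where the contraction factor satisfies 0 ≤ (c − σ_min(Q))/(c + β) < 1; consequently w^{(t)} → w* = (Q + βI)⁻¹k as t → ∞, for any starting point w^{(0)} ∈ ℝⁿ. -/
open Matrix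

private lemma unitary_dot (n : ℕ) (U : Matrix (Fin n) (Fin n) ℝ)
    (hU : Uᵀ * U = 1) (a : Fin n → ℝ) :
    (U *ᵥ a) ⬝ᵥ (U *ᵥ a) = a ⬝ᵥ a := by
  rw [dotProduct_mulVec, ← vecMul_transpose, vecMul_vecMul, hU, vecMul_one]

private lemma spec_bound (n : ℕ) (Q : Matrix (Fin n) (Fin n) ℝ) (hQ : Q.PosSemidef)
    (c σmin : ℝ) (hc : ∀ i, hQ.isHermitian.eigenvalues i ≤ c)
    (hσminlb : ∀ i, σmin ≤ hQ.isHermitian.eigenvalues i) (x : Fin n → ℝ) :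
    ((c • (1 : Matrix (Fin n) (Fin n) ℝ) - Q) *ᵥ x) ⬝ᵥ ((c • (1 : Matrix (Fin n) (Fin n) ℝ) - Q) *ᵥ x)
      ≤ (c - σmin) ^ 2 * (x ⬝ᵥ x) := by
  set hA := hQ.isHermitian
  set U : Matrix (Fin n) (Fin n) ℝ := (hA.eigenvectorUnitary : Matrix (Fin n) (Fin n) ℝ) with hUdef
  have hstar : star U = Uᵀ := by
    simp [Matrix.star_eq_conjTranspose, Matrix.conjTranspose_eq_transpose_of_trivial]
  have hUU : Uᵀ * U = 1 := by
    rw [← hstar]; exact Unitary.coe_star_mul_self _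
  have hUUt : U * Uᵀ = 1 := by
    rw [← hstar]; exact Unitary.coe_mul_star_self _
  set d : Fin n → ℝ := fun i => c - hA.eigenvalues i with hd
  have hM : c • (1 : Matrix (Fin n) (Fin n) ℝ) - Q = U * diagonal d * Uᵀ := by
    have hspec := hA.spectral_theorem
    have hQeq : Q = U * diagonal hA.eigenvalues * Uᵀ := by
      rw [← hstar]
      simpa [Function.comp] using hspec
    have hone : c • (1 : Matrix (Fin n) (Fin n) ℝ) = U * diagonal (fun _ => c) * Uᵀ := by
      rw [← smul_one_eq_diagonal]
      rw [Matrix.mul_smul, Matrix.smul_mul, mul_one, hUUt]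
    rw [hQeq, hone, ← Matrix.sub_mul, ← Matrix.mul_sub, diagonal_sub]
  set y : Fin n → ℝ := Uᵀ *ᵥ x with hy
  have hx : x ⬝ᵥ x = y ⬝ᵥ y := by
    have : Uᵀᵀ * Uᵀ = 1 := by rw [transpose_transpose]; exact hUUt
    rw [(unitary_dot n Uᵀ this x)]
  have hMx : (c • (1 : Matrix (Fin n) (Fin n) ℝ) - Q) *ᵥ x = U *ᵥ (diagonal d *ᵥ y) := by
    rw [hM, ← mulVec_mulVec, ← mulVec_mulVec]
  rw [hMx, unitary_dot n U hUU, hx]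
  have hdiag : (diagonal d *ᵥ y) ⬝ᵥ (diagonal d *ᵥ y) = ∑ i, (d i * y i) * (d i * y i) := by
    simp [dotProduct, mulVec_diagonal]
  have hyy : y ⬝ᵥ y = ∑ i, y i * y i := rfl
  rw [hdiag, hyy, Finset.mul_sum]
  apply Finset.sum_le_sum
  intro i _
  have h1 : 0 ≤ d i := sub_nonneg.mpr (hc i)
  have h2 : d i ≤ c - σmin := sub_le_sub_left (hσminlb i) c
  have h3 : d i ^ 2 ≤ (c - σmin) ^ 2 := pow_le_pow_left₀ h1 h2 2
  nlinarith [sq_nonneg (y i), h3]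

/-- The proximal-point iterates converge geometrically to the unique minimizer:
‖w^{(t)} − w*‖ ≤ ((c − σ_min(Q))/(c + β))^t ‖w^{(0)} − w*‖ for every t, with
contraction factor in [0, 1); consequently w^{(t)} → w* = (Q + βI)⁻¹k.
The norm is the Euclidean norm ‖x‖ = √(xᵀx) on ℝⁿ. -/
theorem ppa_geometric_convergence
    (n : ℕ) (hn : 1 ≤ n)
    (Q : Matrix (Fin n) (Fin n) ℝ) (hQ : Q.PosSemidef)
    (β : ℝ) (hβ : 0 < β) (k : Fin n → ℝ)
    (c : ℝ) (hc : ∀ i, hQ.isHermitian.eigenvalues i ≤ c)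
    (σmin : ℝ)
    (hσminmem : ∃ i, hQ.isHermitian.eigenvalues i = σmin)
    (hσminlb : ∀ i, σmin ≤ hQ.isHermitian.eigenvalues i)
    (w : ℕ → (Fin n → ℝ))
    (hw : ∀ t, w (t + 1) = (β + c)⁻¹ • (k - Q.mulVec (w t) + c • w t))
    (wstar : Fin n → ℝ) (hwstar : wstar = (Q + β • 1)⁻¹.mulVec k) :
    (0 ≤ (c - σmin) / (c + β) ∧ (c - σmin) / (c + β) < 1) ∧
    (∀ t, Real.sqrt ((w t - wstar) ⬝ᵥ (w t - wstar))
        ≤ ((c - σmin) / (c + β)) ^ t * Real.sqrt ((w 0 - wstar) ⬝ᵥ (w 0 - wstar))) ∧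
    Filter.Tendsto w Filter.atTop (nhds wstar) := by
  obtain ⟨i0, hi0⟩ := hσminmem
  have hσ0 : 0 ≤ σmin := hi0 ▸ hQ.eigenvalues_nonneg i0
  have hσc : σmin ≤ c := hi0 ▸ hc i0
  have hcβ : 0 < c + β := by linarith
  set r : ℝ := (c - σmin) / (c + β) with hr
  have hr0 : 0 ≤ r := div_nonneg (by linarith) hcβ.le
  have hr1 : r < 1 := (div_lt_one hcβ).mpr (by linarith)
  -- fixed point equation
  have hPD : (Q + β • (1 : Matrix (Fin n) (Fin n) ℝ)).PosDef := by
    refine Matrix.PosDef.posSemidef_add hQ ?_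
    rw [smul_one_eq_diagonal]
    exact Matrix.PosDef.diagonal (fun i => hβ)
  have hfix : (Q + β • (1 : Matrix (Fin n) (Fin n) ℝ)) *ᵥ wstar = k := by
    rw [hwstar, mulVec_mulVec, mul_nonsing_inv _ (isUnit_iff_isUnit_det _ |>.mp hPD.isUnit),
      one_mulVec]
  have hk : k = Q *ᵥ wstar + β • wstar := by
    rw [← hfix, add_mulVec, smul_mulVec, one_mulVec]
  -- error recursion
  have herr : ∀ t, w (t + 1) - wstar
      = (β + c)⁻¹ • ((c • (1 : Matrix (Fin n) (Fin n) ℝ) - Q) *ᵥ (w t - wstar)) := by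
    intro t
    funext i
    have hbc : β + c ≠ 0 := by linarith
    have hQsub : ((c • (1 : Matrix (Fin n) (Fin n) ℝ) - Q) *ᵥ (w t - wstar)) i
        = c * (w t i - wstar i) - ((Q *ᵥ w t) i - (Q *ᵥ wstar) i) := by
      rw [sub_mulVec, smul_mulVec, one_mulVec, mulVec_sub]
      simp [mul_sub]
    have hki : k i = (Q *ᵥ wstar) i + β * wstar i := by
      rw [hk]; simp
    simp only [hw t, Pi.sub_apply, Pi.smul_apply, Pi.add_apply, smul_eq_mul, hQsub, hki]
    field_simp
    ring
  -- one-step contraction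
  set N : (Fin n → ℝ) → ℝ := fun x => Real.sqrt (x ⬝ᵥ x) with hN
  have hstep : ∀ t, N (w (t + 1) - wstar) ≤ r * N (w t - wstar) := by
    intro t
    have hβc0 : (0:ℝ) < β + c := by linarith
    have hinv : (0:ℝ) ≤ (β + c)⁻¹ := inv_nonneg.mpr hβc0.le
    have hdot : (w (t + 1) - wstar) ⬝ᵥ (w (t + 1) - wstar)
        ≤ r ^ 2 * ((w t - wstar) ⬝ᵥ (w t - wstar)) := by
      rw [herr t, smul_dotProduct, dotProduct_smul, smul_eq_mul, smul_eq_mul]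
      have hb := spec_bound n Q hQ c σmin hc hσminlb (w t - wstar)
      calc (β + c)⁻¹ * ((β + c)⁻¹ * (((c • (1 : Matrix (Fin n) (Fin n) ℝ) - Q) *ᵥ (w t - wstar)) ⬝ᵥ ((c • (1 : Matrix (Fin n) (Fin n) ℝ) - Q) *ᵥ (w t - wstar))))
          ≤ (β + c)⁻¹ * ((β + c)⁻¹ * ((c - σmin) ^ 2 * ((w t - wstar) ⬝ᵥ (w t - wstar)))) := by
            exact mul_le_mul_of_nonneg_left (mul_le_mul_of_nonneg_left hb hinv) hinv
        _ = r ^ 2 * ((w t - wstar) ⬝ᵥ (w t - wstar)) := by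
            have h1 : β + c ≠ 0 := hβc0.ne'
            have h2 : c + β ≠ 0 := hcβ.ne'
            generalize (w t - wstar) ⬝ᵥ (w t - wstar) = s
            rw [hr, add_comm c β, div_pow, div_eq_mul_inv, ← inv_pow]
            ring
    have := Real.sqrt_le_sqrt hdot
    calc N (w (t + 1) - wstar) ≤ Real.sqrt (r ^ 2 * ((w t - wstar) ⬝ᵥ (w t - wstar))) := this
      _ = r * N (w t - wstar) := by
          rw [Real.sqrt_mul (sq_nonneg r), Real.sqrt_sq hr0]
  have hgeo : ∀ t, N (w t - wstar) ≤ r ^ t * N (w 0 - wstar) := by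
    intro t
    induction t with
    | zero => simp
    | succ t ih =>
      calc N (w (t + 1) - wstar) ≤ r * N (w t - wstar) := hstep t
        _ ≤ r * (r ^ t * N (w 0 - wstar)) := by
            exact mul_le_mul_of_nonneg_left ih hr0
        _ = r ^ (t + 1) * N (w 0 - wstar) := by ring
  refine ⟨⟨hr0, hr1⟩, hgeo, ?_⟩
  -- convergence
  rw [tendsto_pi_nhds]
  intro i
  rw [tendsto_iff_dist_tendsto_zero]
  have hbound : ∀ t, dist (w t i) (wstar i) ≤ r ^ t * N (w 0 - wstar) := by
    intro t
    have h1 : dist (w t i) (wstar i) = |(w t - wstar) i| := by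
      rw [Real.dist_eq]; simp
    have h2 : |(w t - wstar) i| ≤ N (w t - wstar) := by
      rw [hN, ← Real.sqrt_sq_eq_abs]
      apply Real.sqrt_le_sqrt
      have : ((w t - wstar) i) ^ 2 ≤ ∑ j, ((w t - wstar) j) ^ 2 := by
        apply Finset.single_le_sum (f := fun j => ((w t - wstar) j) ^ 2)
          (fun j _ => sq_nonneg _) (Finset.mem_univ i)
      simpa [dotProduct, sq] using this
    rw [h1]
    exact h2.trans (hgeo t)
  have hlim : Filter.Tendsto (fun t => r ^ t * N (w 0 - wstar)) Filter.atTop (nhds 0) := by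
    have := (tendsto_pow_atTop_nhds_zero_of_lt_one hr0 hr1).mul_const (N (w 0 - wstar))
    simpa using this
  exact squeeze_zero (fun t => dist_nonneg) hbound hlim
end

section
/- Given a convergence threshold ε > 0, the proximal-point iteration reaches ε-accuracy after at most log(‖w^{(0)} − w*‖/ε) / log((c + β)/(c − σ_min(Q))) iterations: if c > σ_min(Q), ‖w^{(0)} − w*‖ > ε, and t ≥ log(‖w^{(0)} − w*‖/ε) / log((c + β)/(c − σ_min(Q))), then ‖w^{(t)} − w*‖ ≤ ε. -/
/-!
The error `e t = w t - wstar` obeys `e (t + 1) = (β + c)⁻¹ • (c • e t - Q *ᵥ e t)`. In an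
orthonormal eigenbasis of `Q` the operator `c - Q` is diagonal with entries
`c - λᵢ ∈ [0, c - σmin]`, so each step contracts the Euclidean norm of the error by
`ρ = (c - σmin) / (β + c) < 1`. Hence `‖e t‖ ≤ ρ ^ t * ‖e 0‖`, which is at most `ε` as soon as
`t ≥ log (‖e 0‖ / ε) / log ρ⁻¹`.
-/

open Matrix WithLp

theorem OrthonormalBasis.norm_le_mul_norm_of_norm_repr_le {𝕜 E ι : Type*} [RCLike 𝕜]
    [NormedAddCommGroup E] [InnerProductSpace 𝕜 E] [Fintype ι] (b : OrthonormalBasis ι 𝕜 E)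
    {x y : E} {a : ℝ} (ha : 0 ≤ a) (h : ∀ i, ‖b.repr y i‖ ≤ a * ‖b.repr x i‖) :
    ‖y‖ ≤ a * ‖x‖ := by
  rw [← b.repr.norm_map x, ← b.repr.norm_map y]
  refine le_of_sq_le_sq ?_ (by positivity)
  rw [mul_pow, EuclideanSpace.norm_sq_eq, EuclideanSpace.norm_sq_eq, Finset.mul_sum]
  gcongr with i
  rw [← mul_pow]
  exact pow_le_pow_left₀ (norm_nonneg _) (h i) 2

namespace Matrix.IsHermitian

variable {𝕜 ι : Type*} [RCLike 𝕜] [Fintype ι] [DecidableEq ι] {Q : Matrix ι ι 𝕜}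

theorem eigenvectorBasis_repr_mulVec (hQ : Q.IsHermitian) (v : ι → 𝕜) (i : ι) :
    hQ.eigenvectorBasis.repr (toLp 2 (Q *ᵥ v)) i =
      hQ.eigenvalues i * hQ.eigenvectorBasis.repr (toLp 2 v) i := by
  simp only [eigenvectorBasis, OrthonormalBasis.repr_reindex, eigenvalues, eigenvalues₀,
    ← LinearMap.IsSymmetric.eigenvectorBasis_apply_self_apply, toLpLin_toLp, toLin'_apply]

theorem norm_smul_sub_mulVec_le (hQ : Q.IsHermitian) {c a : ℝ} (ha : 0 ≤ a)
    (h : ∀ i, |c - hQ.eigenvalues i| ≤ a) (v : ι → 𝕜) :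
    ‖toLp 2 (c • v - Q *ᵥ v)‖ ≤ a * ‖toLp 2 v‖ := by
  refine hQ.eigenvectorBasis.norm_le_mul_norm_of_norm_repr_le ha fun i ↦ ?_
  rw [toLp_sub, map_sub, PiLp.sub_apply, hQ.eigenvectorBasis_repr_mulVec, toLp_smul,
    RCLike.real_smul_eq_coe_smul (K := 𝕜), map_smul, PiLp.smul_apply, smul_eq_mul, ← sub_mul,
    norm_mul, ← RCLike.ofReal_sub, RCLike.norm_ofReal]
  gcongr
  exact h i

end Matrix.IsHermitian

theorem Matrix.sqrt_dotProduct_self_eq_norm {ι : Type*} [Fintype ι] (v : ι → ℝ) :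
    √(v ⬝ᵥ v) = ‖toLp 2 v‖ := by
  rw [norm_eq_sqrt_real_inner, EuclideanSpace.inner_eq_star_dotProduct]
  simp

theorem Matrix.PosSemidef.mulVec_add_smul_one_inv_mulVec {ι : Type*} [Fintype ι] [DecidableEq ι]
    {Q : Matrix ι ι ℝ} (hQ : Q.PosSemidef) {β : ℝ} (hβ : 0 < β) (k : ι → ℝ) :
    Q *ᵥ ((Q + β • 1)⁻¹ *ᵥ k) + β • ((Q + β • 1)⁻¹ *ᵥ k) = k := by
  have hdet : IsUnit (Q + β • 1).det :=
    (isUnit_iff_isUnit_det _).1 (PosDef.posSemidef_add hQ (PosDef.one.smul hβ)).isUnit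
  calc _ = (Q + β • 1) *ᵥ ((Q + β • 1)⁻¹ *ᵥ k) := by rw [add_mulVec, smul_mulVec, one_mulVec]
    _ = k := by rw [mulVec_mulVec, mul_nonsing_inv _ hdet, one_mulVec]

theorem pow_mul_le_of_log_div_log_inv_le {ρ D ε : ℝ} {t : ℕ} (hρ₀ : 0 < ρ) (hρ₁ : ρ < 1)
    (hε : 0 < ε) (ht : Real.log (D / ε) / Real.log ρ⁻¹ ≤ t) : ρ ^ t * D ≤ ε := by
  have hlog : 0 < Real.log ρ⁻¹ := Real.log_pos ((one_lt_inv₀ hρ₀).2 hρ₁)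
  have hD : D / ε ≤ ρ⁻¹ ^ t := calc
    D / ε ≤ Real.exp (Real.log (D / ε)) := Real.le_exp_log _
    _ ≤ Real.exp (t * Real.log ρ⁻¹) := Real.exp_le_exp.2 ((div_le_iff₀ hlog).1 ht)
    _ = ρ⁻¹ ^ t := by rw [← Real.log_pow, Real.exp_log (by positivity)]
  rwa [div_le_iff₀ hε, inv_pow, inv_mul_eq_div, le_div_iff₀ (by positivity), mul_comm] at hD

section ProximalPoint

variable {ι K : Type*} [Fintype ι]

def ppaStep [Field K] (Q : Matrix ι ι K) (β c : K) (k w : ι → K) : ι → K :=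
  (β + c)⁻¹ • (k - Q *ᵥ w + c • w)

theorem ppaStep_sub [Field K] {Q : Matrix ι ι K} {β c : K} {k wstar : ι → K}
    (hk : Q *ᵥ wstar + β • wstar = k) (hβc : β + c ≠ 0) (w : ι → K) :
    ppaStep Q β c k w - wstar = (β + c)⁻¹ • (c • (w - wstar) - Q *ᵥ (w - wstar)) := by
  rw [ppaStep, eq_inv_smul_iff₀ hβc, smul_sub, smul_inv_smul₀ hβc, ← hk, mulVec_sub]
  module

theorem norm_ppaStep_sub_le [DecidableEq ι] {Q : Matrix ι ι ℝ} (hQ : Q.IsHermitian)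
    {β c σ : ℝ} (hβc : 0 < β + c) (hσc : σ ≤ c) (hσ : ∀ i, σ ≤ hQ.eigenvalues i)
    (hc : ∀ i, hQ.eigenvalues i ≤ c) {k wstar : ι → ℝ} (hk : Q *ᵥ wstar + β • wstar = k)
    (w : ι → ℝ) :
    ‖toLp 2 (ppaStep Q β c k w - wstar)‖ ≤ (c - σ) / (β + c) * ‖toLp 2 (w - wstar)‖ := by
  rw [ppaStep_sub hk hβc.ne', toLp_smul, norm_smul, Real.norm_eq_abs, abs_inv,
    abs_of_pos hβc, div_eq_inv_mul, mul_assoc]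
  gcongr
  exact hQ.norm_smul_sub_mulVec_le (sub_nonneg.2 hσc)
    (fun i ↦ abs_le.2 ⟨by linarith [hc i], by linarith [hσ i]⟩) _

end ProximalPoint

theorem ppa_iteration_count_bound_general
    (n : ℕ)
    (Q : Matrix (Fin n) (Fin n) ℝ) (hQ : Q.PosSemidef)
    (β : ℝ) (hβ : 0 < β) (k : Fin n → ℝ)
    (c : ℝ) (hc : ∀ i, hQ.isHermitian.eigenvalues i ≤ c)
    (σmin : ℝ)
    (hσminmem : ∃ i, hQ.isHermitian.eigenvalues i = σmin)
    (hσminlb : ∀ i, σmin ≤ hQ.isHermitian.eigenvalues i)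
    (w : ℕ → (Fin n → ℝ))
    (hw : ∀ t, w (t + 1) = (β + c)⁻¹ • (k - Q.mulVec (w t) + c • w t))
    (wstar : Fin n → ℝ) (hwstar : wstar = (Q + β • 1)⁻¹.mulVec k)
    (ε : ℝ) (hε : 0 < ε)
    (hcσ : σmin < c)
    (t : ℕ)
    (ht : Real.log (Real.sqrt ((w 0 - wstar) ⬝ᵥ (w 0 - wstar)) / ε) /
        Real.log ((c + β) / (c - σmin)) ≤ (t : ℝ)) :
    Real.sqrt ((w t - wstar) ⬝ᵥ (w t - wstar)) ≤ ε := by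
  obtain ⟨i₀, rfl⟩ := hσminmem
  have hσ₀ := hQ.eigenvalues_nonneg i₀
  have hβc : 0 < β + c := by linarith
  have hk : Q *ᵥ wstar + β • wstar = k := hwstar ▸ hQ.mulVec_add_smul_one_inv_mulVec hβ k
  set ρ := (c - hQ.isHermitian.eigenvalues i₀) / (β + c)
  have hρ₀ : 0 < ρ := div_pos (by linarith) hβc
  have hρ₁ : ρ < 1 := (div_lt_one hβc).2 (by linarith)
  have hdecay : ‖toLp 2 (w t - wstar)‖ ≤ ρ ^ t * ‖toLp 2 (w 0 - wstar)‖ :=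
    le_geom (u := fun s ↦ ‖toLp 2 (w s - wstar)‖) hρ₀.le t fun s _ ↦
      hw s ▸ norm_ppaStep_sub_le hQ.isHermitian hβc hcσ.le hσminlb hc hk (w s)
  rw [show (c + β) / (c - _) = ρ⁻¹ by rw [inv_div, add_comm]] at ht
  simp only [sqrt_dotProduct_self_eq_norm] at ht ⊢
  exact hdecay.trans (pow_mul_le_of_log_div_log_inv_le hρ₀ hρ₁ hε ht)

/-- Iteration-count bound for the proximal-point iteration: if c > σ_min(Q),
‖w^{(0)} − w*‖ > ε, and t ≥ log(‖w^{(0)} − w*‖/ε) / log((c + β)/(c − σ_min(Q))),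
then ‖w^{(t)} − w*‖ ≤ ε.  The norm is the Euclidean norm ‖x‖ = √(xᵀx),
and log is the natural logarithm. -/
theorem ppa_iteration_count_bound
    (n : ℕ) (hn : 1 ≤ n)
    (Q : Matrix (Fin n) (Fin n) ℝ) (hQ : Q.PosSemidef)
    (β : ℝ) (hβ : 0 < β) (k : Fin n → ℝ)
    (c : ℝ) (hc : ∀ i, hQ.isHermitian.eigenvalues i ≤ c)
    (σmin : ℝ)
    (hσminmem : ∃ i, hQ.isHermitian.eigenvalues i = σmin)
    (hσminlb : ∀ i, σmin ≤ hQ.isHermitian.eigenvalues i)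
    (w : ℕ → (Fin n → ℝ))
    (hw : ∀ t, w (t + 1) = (β + c)⁻¹ • (k - Q.mulVec (w t) + c • w t))
    (wstar : Fin n → ℝ) (hwstar : wstar = (Q + β • 1)⁻¹.mulVec k)
    (ε : ℝ) (hε : 0 < ε)
    (hcσ : σmin < c)
    (h0 : ε < Real.sqrt ((w 0 - wstar) ⬝ᵥ (w 0 - wstar)))
    (t : ℕ)
    (ht : Real.log (Real.sqrt ((w 0 - wstar) ⬝ᵥ (w 0 - wstar)) / ε) /
        Real.log ((c + β) / (c - σmin)) ≤ (t : ℝ)) :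
    Real.sqrt ((w t - wstar) ⬝ᵥ (w t - wstar)) ≤ ε :=
  ppa_iteration_count_bound_general n Q hQ β hβ k c hc σmin hσminmem hσminlb w hw wstar hwstar ε hε
    hcσ t ht
end

section
/- The accelerated proximal gradient (APG) iterates converge in function value to the global minimum of f at rate O(1/t²): for every t ≥ 1, f(w^{(t)}) − f(w*) ≤ 2b ‖w^{(0)} − w*‖² / (t + 1)², where w* = (Q + βI)⁻¹k is the unique minimizer of f. -/
/-!
A gradient step `w⁺ = v - b⁻¹ ∇f(v)` on a quadratic whose Hessian `A` satisfies `0 ≤ A ≤ b`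
(the upper bound coming from the eigenvalues of `Q`) obeys, by the exact second-order Taylor
expansion, `f w⁺ - f y ≤ b ⟪v - w⁺, v - y⟫ - b/2 ‖v - w⁺‖²` for every `y`. From this inequality
alone Beck–Teboulle's argument runs in any real inner product space: since
`d (t+1)² - d (t+1) = d t²`, the energy
`2 d_t² (f w_{t+1} - f x) + b ‖d_t (w_{t+1} - x) - (d_t - 1) (w_t - x)‖²`
is nonincreasing in `t`, it starts below `b ‖w_0 - x‖²`, and `d_t ≥ (t + 2) / 2`.
-/

open Matrix RealInnerProductSpace WithLp
open scoped ComplexOrder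

namespace Matrix

variable {ι 𝕜 : Type*} [Fintype ι] [DecidableEq ι] [RCLike 𝕜]

theorem IsHermitian.posSemidef_smul_one_sub_s18 {Q : Matrix ι ι 𝕜} (hQ : Q.IsHermitian) {σ : ℝ}
    (hσ : ∀ i, hQ.eigenvalues i ≤ σ) : (σ • 1 - Q).PosSemidef := by
  set U := hQ.eigenvectorUnitary
  have hσ1 : σ • (1 : Matrix ι ι 𝕜) = Unitary.conjStarAlgAut 𝕜 _ U ((σ : 𝕜) • 1) := by
    rw [map_smul (Unitary.conjStarAlgAut 𝕜 _ U) (σ : 𝕜), map_one,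
      RCLike.real_smul_eq_coe_smul (K := 𝕜)]
  have hQU : Q = Unitary.conjStarAlgAut 𝕜 _ U (diagonal (RCLike.ofReal ∘ hQ.eigenvalues)) :=
    hQ.spectral_theorem
  rw [hσ1, hQU, ← map_sub, Unitary.conjStarAlgAut_apply,
    Unitary.isUnit_coe.posSemidef_star_right_conjugate_iff, smul_one_eq_diagonal, diagonal_sub]
  exact posSemidef_diagonal_iff.mpr fun i => by simpa [sub_nonneg] using hσ i

theorem IsHermitian.dotProduct_mulVec_le_s18 {Q : Matrix ι ι ℝ} (hQ : Q.IsHermitian) {σ : ℝ}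
    (hσ : ∀ i, hQ.eigenvalues i ≤ σ) (x : ι → ℝ) : x ⬝ᵥ Q *ᵥ x ≤ σ * (x ⬝ᵥ x) := by
  have h := (hQ.posSemidef_smul_one_sub_s18 hσ).dotProduct_mulVec_nonneg x
  simpa only [star_trivial, sub_mulVec, dotProduct_sub, smul_mulVec, one_mulVec,
    dotProduct_smul, smul_eq_mul, sub_nonneg] using h

end Matrix

section Quadratic

variable {ι : Type*} [Fintype ι] {A : Matrix ι ι ℝ} {k : ι → ℝ} {f : (ι → ℝ) → ℝ}

theorem quadratic_eq_taylor (hA : A.IsHermitian)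
    (hf : ∀ w, f w = 1 / 2 * (w ⬝ᵥ A *ᵥ w) - w ⬝ᵥ k) (x y : ι → ℝ) :
    f y = f x + (y - x) ⬝ᵥ (A *ᵥ x - k) + 1 / 2 * ((y - x) ⬝ᵥ A *ᵥ (y - x)) := by
  have hsymm : x ⬝ᵥ A *ᵥ y = y ⬝ᵥ A *ᵥ x := by
    rw [dotProduct_mulVec, ← mulVec_transpose, isHermitian_iff_isSymm.mp hA, dotProduct_comm]
  simp only [hf, mulVec_sub, dotProduct_sub, sub_dotProduct, hsymm]
  ring

theorem quadratic_gradient_step_le (hA : A.PosSemidef) {b : ℝ} (hb : 0 < b)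
    (hAb : ∀ x, x ⬝ᵥ A *ᵥ x ≤ b * (x ⬝ᵥ x))
    (hf : ∀ w, f w = 1 / 2 * (w ⬝ᵥ A *ᵥ w) - w ⬝ᵥ k) {v w' : ι → ℝ}
    (hw' : w' = v - b⁻¹ • (A *ᵥ v - k)) (x : ι → ℝ) :
    f w' - f x ≤ b * ((v - w') ⬝ᵥ (v - x)) - b / 2 * ((v - w') ⬝ᵥ (v - w')) := by
  obtain ⟨p, hp⟩ : ∃ p, v - w' = p := ⟨_, rfl⟩
  have hgrad : A *ᵥ v - k = b • p := by
    rw [← hp, hw', sub_sub_cancel, smul_smul, mul_inv_cancel₀ hb.ne', one_smul]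
  have hw'v : w' - v = -p := by rw [← hp, neg_sub]
  have hxv : (x - v) ⬝ᵥ p = -(p ⬝ᵥ (v - x)) := by
    rw [dotProduct_comm, ← neg_sub, dotProduct_neg]
  have hAp := hAb p
  have hAxv : 0 ≤ (x - v) ⬝ᵥ A *ᵥ (x - v) := by
    simpa using hA.dotProduct_mulVec_nonneg (x - v)
  rw [quadratic_eq_taylor hA.isHermitian hf v w', quadratic_eq_taylor hA.isHermitian hf v x,
    hgrad, hw'v, hp]
  simp only [dotProduct_smul, smul_eq_mul, hxv, neg_dotProduct, mulVec_neg, dotProduct_neg,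
    neg_neg]
  linarith

end Quadratic

noncomputable def apgMomentum (a : ℝ) : ℝ := (1 + √(1 + 4 * a ^ 2)) / 2

theorem apgMomentum_sq_sub_self (a : ℝ) : apgMomentum a ^ 2 - apgMomentum a = a ^ 2 := by
  have h := Real.sq_sqrt (show 0 ≤ 1 + 4 * a ^ 2 by positivity)
  unfold apgMomentum
  linear_combination h / 4

theorem one_le_apgMomentum (a : ℝ) : 1 ≤ apgMomentum a := by
  have : 1 ≤ √(1 + 4 * a ^ 2) := Real.one_le_sqrt.mpr (by nlinarith)
  unfold apgMomentum
  linarith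

theorem add_half_le_apgMomentum (a : ℝ) : a + 1 / 2 ≤ apgMomentum a := by
  have : 2 * a ≤ √(1 + 4 * a ^ 2) := Real.le_sqrt_of_sq_le (by nlinarith)
  unfold apgMomentum
  linarith

theorem add_two_div_two_le_of_apgMomentum {d : ℕ → ℝ} (hd0 : d 0 = 1)
    (hd : ∀ t, d (t + 1) = apgMomentum (d t)) (t : ℕ) : ((t : ℝ) + 2) / 2 ≤ d t := by
  induction t with
  | zero => simp [hd0]
  | succ t ih =>
    have := add_half_le_apgMomentum (d t)
    push_cast
    rw [hd]
    linarith

section APG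

variable {E : Type*} [NormedAddCommGroup E] [InnerProductSpace ℝ E]

/-- `gradient_step` is the inequality that a gradient step with step size `b⁻¹` satisfies for
any convex `f` with `b`-Lipschitz gradient (Beck–Teboulle, Lemma 2.3). -/
structure IsAPGIteration (f : E → ℝ) (b : ℝ) (w v : ℕ → E) (d : ℕ → ℝ) : Prop where
  gradient_step : ∀ t y, f (w (t + 1)) - f y ≤
    b * ⟪v t - w (t + 1), v t - y⟫ - b / 2 * ‖v t - w (t + 1)‖ ^ 2
  init : w 0 = v 0
  momentum_zero : d 0 = 1
  momentum_succ : ∀ t, d (t + 1) = apgMomentum (d t)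
  extrapolate : ∀ t, v (t + 1) = w (t + 1) + ((d t - 1) / d (t + 1)) • (w (t + 1) - w t)

def apgLyapunovPoint (w : ℕ → E) (d : ℕ → ℝ) (x : E) (t : ℕ) : E :=
  d t • (w (t + 1) - x) - (d t - 1) • (w t - x)

def apgEnergy (f : E → ℝ) (b : ℝ) (w : ℕ → E) (d : ℕ → ℝ) (x : E) (t : ℕ) : ℝ :=
  2 * d t ^ 2 * (f (w (t + 1)) - f x) + b * ‖apgLyapunovPoint w d x t‖ ^ 2

namespace IsAPGIteration

variable {f : E → ℝ} {b : ℝ} {w v : ℕ → E} {d : ℕ → ℝ}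

theorem apgEnergy_zero_le (h : IsAPGIteration f b w v d) (x : E) :
    apgEnergy f b w d x 0 ≤ b * ‖w 0 - x‖ ^ 2 := by
  have hstep := h.gradient_step 0 x
  have hL : apgLyapunovPoint w d x 0 = (v 0 - x) - (v 0 - w 1) := by
    simp [apgLyapunovPoint, h.momentum_zero]
  rw [apgEnergy, hL, norm_sub_sq_real, h.momentum_zero, h.init, real_inner_comm]
  linarith

theorem apgEnergy_succ_le (h : IsAPGIteration f b w v d) (x : E) (t : ℕ) :
    apgEnergy f b w d x (t + 1) ≤ apgEnergy f b w d x t := by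
  have hδ : 1 ≤ d (t + 1) := (h.momentum_succ t).symm ▸ one_le_apgMomentum (d t)
  have hδsq : d (t + 1) ^ 2 - d (t + 1) = d t ^ 2 :=
    (h.momentum_succ t).symm ▸ apgMomentum_sq_sub_self (d t)
  have hδ0 : d (t + 1) ≠ 0 := by positivity
  set δ := d (t + 1) with hδ_def
  set p := v (t + 1) - w (t + 1 + 1)
  have hL : apgLyapunovPoint w d x t = (δ - 1) • (v (t + 1) - w (t + 1)) + (v (t + 1) - x) := by
    rw [apgLyapunovPoint, h.extrapolate t, ← hδ_def]
    match_scalars <;> field_simp <;> ring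
  have hL' : apgLyapunovPoint w d x (t + 1) = apgLyapunovPoint w d x t - δ • p := by
    rw [hL, apgLyapunovPoint]
    match_scalars <;> ring
  have hnorm : ‖apgLyapunovPoint w d x (t + 1)‖ ^ 2 = ‖apgLyapunovPoint w d x t‖ ^ 2
      - 2 * δ * ((δ - 1) * ⟪p, v (t + 1) - w (t + 1)⟫ + ⟪p, v (t + 1) - x⟫)
      + δ ^ 2 * ‖p‖ ^ 2 := by
    rw [hL', norm_sub_sq_real, real_inner_comm, real_inner_smul_left, norm_smul, mul_pow,
      Real.norm_eq_abs, sq_abs, hL, inner_add_right, real_inner_smul_right]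
    ring
  -- the gradient-step inequality at `y = w (t + 1)` and at `y = x`, weighted `δ (δ - 1)` and `δ`
  have h₁ := mul_le_mul_of_nonneg_left (h.gradient_step (t + 1) (w (t + 1)))
    (mul_nonneg (by linarith) (by linarith) : 0 ≤ δ * (δ - 1))
  have h₂ := mul_le_mul_of_nonneg_left (h.gradient_step (t + 1) x) (by linarith : 0 ≤ δ)
  rw [apgEnergy, apgEnergy, hnorm, ← hδsq]
  linarith

theorem apgEnergy_le (h : IsAPGIteration f b w v d) (x : E) (t : ℕ) :
    apgEnergy f b w d x t ≤ b * ‖w 0 - x‖ ^ 2 := by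
  induction t with
  | zero => exact h.apgEnergy_zero_le x
  | succ t ih => exact (h.apgEnergy_succ_le x t).trans ih

theorem sub_le_div_sq (h : IsAPGIteration f b w v d) (hb : 0 ≤ b) (x : E) (t : ℕ) :
    f (w (t + 1)) - f x ≤ 2 * b * ‖w 0 - x‖ ^ 2 / ((t : ℝ) + 2) ^ 2 := by
  have hE := h.apgEnergy_le x t
  have hdt := add_two_div_two_le_of_apgMomentum h.momentum_zero h.momentum_succ t
  have hL : 0 ≤ b * ‖apgLyapunovPoint w d x t‖ ^ 2 := by positivity
  have hR : 0 ≤ b * ‖w 0 - x‖ ^ 2 := by positivity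
  have ht : (0 : ℝ) ≤ t := t.cast_nonneg
  rw [apgEnergy] at hE
  rw [le_div_iff₀ (by positivity)]
  rcases le_or_gt 0 (f (w (t + 1)) - f x) with hF | hF
  · have : ((t : ℝ) + 2) ^ 2 ≤ 4 * d t ^ 2 := by nlinarith
    nlinarith
  · nlinarith

end IsAPGIteration

end APG

-- `ι → ℝ` carries the sup norm, so the iteration is transported to `EuclideanSpace ℝ ι`.
theorem IsAPGIteration.of_quadratic {ι : Type*} [Fintype ι] {A : Matrix ι ι ℝ} (hA : A.PosSemidef)
    {b : ℝ} (hb : 0 < b) (hAb : ∀ x, x ⬝ᵥ A *ᵥ x ≤ b * (x ⬝ᵥ x)) {k : ι → ℝ}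
    {f : (ι → ℝ) → ℝ} (hf : ∀ w, f w = 1 / 2 * (w ⬝ᵥ A *ᵥ w) - w ⬝ᵥ k)
    {w v : ℕ → ι → ℝ} {d : ℕ → ℝ} (hinit : w 0 = v 0) (hd0 : d 0 = 1)
    (hw : ∀ t, w (t + 1) = v t - b⁻¹ • (A *ᵥ v t - k))
    (hd : ∀ t, d (t + 1) = apgMomentum (d t))
    (hv : ∀ t, v (t + 1) = w (t + 1) + ((d t - 1) / d (t + 1)) • (w (t + 1) - w t)) :
    IsAPGIteration (fun y : EuclideanSpace ℝ ι => f y.ofLp) b (fun t => toLp 2 (w t))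
      (fun t => toLp 2 (v t)) d where
  gradient_step t y := by
    rw [← real_inner_self_eq_norm_sq, ← toLp_ofLp 2 y, ← toLp_sub, ← toLp_sub,
      EuclideanSpace.inner_toLp_toLp, EuclideanSpace.inner_toLp_toLp]
    simpa [dotProduct_comm] using quadratic_gradient_step_le hA hb hAb hf (hw t) y.ofLp
  init := by simp [hinit]
  momentum_zero := hd0
  momentum_succ := hd
  extrapolate t := by simp [hv t]

theorem apg_quadratic_convergence_general
    (n : ℕ) (Q : Matrix (Fin n) (Fin n) ℝ) (hQ : Q.PosSemidef)
    (β : ℝ) (hβ : 0 < β) (k : Fin n → ℝ)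
    (f : (Fin n → ℝ) → ℝ)
    (hf : ∀ w, f w = (1 / 2) * (w ⬝ᵥ (Q + β • 1).mulVec w) - w ⬝ᵥ k)
    (σmax : ℝ)
    (hσmaxmem : ∃ i, hQ.isHermitian.eigenvalues i = σmax)
    (hσmaxub : ∀ i, hQ.isHermitian.eigenvalues i ≤ σmax)
    (b : ℝ) (hb : σmax + β ≤ b)
    (w v : ℕ → (Fin n → ℝ)) (d : ℕ → ℝ)
    (hinit : w 0 = v 0) (hd0 : d 0 = 1)
    (hwstep : ∀ t, w (t + 1) = v t - b⁻¹ • ((Q + β • 1).mulVec (v t) - k))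
    (hdstep : ∀ t, d (t + 1) = (1 + Real.sqrt (1 + 4 * (d t) ^ 2)) / 2)
    (hvstep : ∀ t, v (t + 1) = w (t + 1) + ((d t - 1) / d (t + 1)) • (w (t + 1) - w t))
    (wstar : Fin n → ℝ) :
    ∀ t : ℕ, 1 ≤ t →
      f (w t) - f wstar
        ≤ 2 * b * ((w 0 - wstar) ⬝ᵥ (w 0 - wstar)) / ((t : ℝ) + 1) ^ 2 := by
  have hσ : 0 ≤ σmax := by
    obtain ⟨i, hi⟩ := hσmaxmem
    exact hi ▸ hQ.eigenvalues_nonneg i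
  have hb0 : 0 < b := by linarith
  have hA : (Q + β • 1).PosSemidef := hQ.add (PosSemidef.one.smul hβ.le)
  have hAb (x : Fin n → ℝ) : x ⬝ᵥ (Q + β • 1) *ᵥ x ≤ b * (x ⬝ᵥ x) := by
    have hQx := hQ.isHermitian.dotProduct_mulVec_le_s18 hσmaxub x
    have hx : 0 ≤ x ⬝ᵥ x := by simpa using dotProduct_star_self_nonneg x
    simp only [add_mulVec, dotProduct_add, smul_mulVec, one_mulVec, dotProduct_smul, smul_eq_mul]
    nlinarith
  intro t ht
  obtain ⟨s, rfl⟩ := Nat.exists_eq_add_of_le' ht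
  have h := (IsAPGIteration.of_quadratic hA hb0 hAb hf hinit hd0 hwstep hdstep hvstep).sub_le_div_sq
    hb0.le (toLp 2 wstar) s
  rw [← toLp_sub, ← real_inner_self_eq_norm_sq, EuclideanSpace.inner_toLp_toLp] at h
  simpa [add_assoc, one_add_one_eq_two] using h

/-- The accelerated proximal gradient (APG) iterates converge in function value
to the global minimum of f at rate O(1/t²): for every t ≥ 1,
f(w^{(t)}) − f(w*) ≤ 2b‖w^{(0)} − w*‖²/(t + 1)², where w* = (Q + βI)⁻¹k,
b ≥ σ_max(Q) + β is a Lipschitz constant for ∇f, and ‖x‖² = xᵀx is the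
squared Euclidean norm. -/
theorem apg_quadratic_convergence
    (n : ℕ) (Q : Matrix (Fin n) (Fin n) ℝ) (hQ : Q.PosSemidef)
    (β : ℝ) (hβ : 0 < β) (k : Fin n → ℝ)
    (f : (Fin n → ℝ) → ℝ)
    (hf : ∀ w, f w = (1 / 2) * (w ⬝ᵥ (Q + β • 1).mulVec w) - w ⬝ᵥ k)
    (σmax : ℝ)
    (hσmaxmem : ∃ i, hQ.isHermitian.eigenvalues i = σmax)
    (hσmaxub : ∀ i, hQ.isHermitian.eigenvalues i ≤ σmax)
    (b : ℝ) (hb : σmax + β ≤ b)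
    (w v : ℕ → (Fin n → ℝ)) (d : ℕ → ℝ)
    (hinit : w 0 = v 0) (hd0 : d 0 = 1)
    (hwstep : ∀ t, w (t + 1) = v t - b⁻¹ • ((Q + β • 1).mulVec (v t) - k))
    (hdstep : ∀ t, d (t + 1) = (1 + Real.sqrt (1 + 4 * (d t) ^ 2)) / 2)
    (hvstep : ∀ t, v (t + 1) = w (t + 1) + ((d t - 1) / d (t + 1)) • (w (t + 1) - w t))
    (wstar : Fin n → ℝ) (hwstar : wstar = (Q + β • 1)⁻¹.mulVec k) :
    ∀ t : ℕ, 1 ≤ t →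
      f (w t) - f wstar
        ≤ 2 * b * ((w 0 - wstar) ⬝ᵥ (w 0 - wstar)) / ((t : ℝ) + 1) ^ 2 :=
  apg_quadratic_convergence_general n Q hQ β hβ k f hf σmax hσmaxmem hσmaxub b hb w v d hinit hd0
    hwstep hdstep hvstep wstar
end
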